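/- For any hypothesis h, if L⇝_P(h) ≤ α (expected strategic loss under surrogate graph ⇝) and d_{H,P_X}(→,⇝) ≤ β with h ∈ H, then L→_P(h) ≤ 2α + β; i.e., minimizing the surrogate strategic loss controls the true strategic loss up to factor 2 plus the graph distance. -/

import Mathlib

open MeasureTheory

open Classical in
noncomputable def l01 {X : Type*} (h : X → Bool) (x : X) (y : Bool) : ℝ :=
  if h x ≠ y then 1 else 0

open Classical in
noncomputable def lsc {X : Type*} (R : X → X → Prop) (h : X → Bool) (x : X) : ℝ :=
  if h x = false ∧ ∃ x', R x x' ∧ h x' = true then 1 else 0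

open Classical in
noncomputable def lstr {X : Type*} (R : X → X → Prop) (h : X → Bool) (x : X) (y : Bool) : ℝ :=
  if h x ≠ y ∨ (h x = false ∧ ∃ x', R x x' ∧ h x' = true) then 1 else 0

def lossSet01 {X : Type*} (h : X → Bool) : Set (X × Bool) := {p | h p.1 ≠ p.2}

def lossSetSc {X : Type*} (R : X → X → Prop) (h : X → Bool) : Set (X × Bool) :=
  {p | h p.1 = false ∧ ∃ x', R p.1 x' ∧ h x' = true}

def lossSetStr {X : Type*} (R : X → X → Prop) (h : X → Bool) : Set (X × Bool) :=
  {p | h p.1 ≠ p.2 ∨ (h p.1 = false ∧ ∃ x', R p.1 x' ∧ h x' = true)}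

def graphOf {X : Type*} (h : X → Bool) : Set (X × Bool) := {p | p.2 = h p.1}

def Shatters {Z : Type*} (U : Set (Set Z)) (S : Finset Z) : Prop :=
  ∀ T ⊆ S, ∃ u ∈ U, ∀ z ∈ S, (z ∈ u ↔ z ∈ T)

noncomputable def vcDim {Z : Type*} (U : Set (Set Z)) : ℕ∞ :=
  ⨆ (S : Finset Z) (_ : Shatters U S), (S.card : ℕ∞)

def ShattersF {X : Type*} (H : Set (X → Bool)) (S : Finset X) : Prop :=
  ∀ f : X → Bool, ∃ h ∈ H, ∀ x ∈ S, h x = f x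

noncomputable def vcDimF {X : Type*} (H : Set (X → Bool)) : ℕ∞ :=
  ⨆ (S : Finset X) (_ : ShattersF H S), (S.card : ℕ∞)

noncomputable def sLoss {X : Type*} [MeasurableSpace X] (P : Measure (X × Bool))
    (R : X → X → Prop) (h : X → Bool) : ℝ := ∫ p, lstr R h p.1 p.2 ∂P

noncomputable def bLoss {X : Type*} [MeasurableSpace X] (P : Measure (X × Bool))
    (h : X → Bool) : ℝ := ∫ p, l01 h p.1 p.2 ∂P

noncomputable def scLoss {X : Type*} [MeasurableSpace X] (PX : Measure X)
    (R : X → X → Prop) (h : X → Bool) : ℝ := ∫ x, lsc R h x ∂PX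

noncomputable def gdist {X : Type*} [MeasurableSpace X] (H : Set (X → Bool))
    (PX : Measure X) (R R' : X → X → Prop) : ℝ :=
  ⨆ h : H, ∫ x, |lsc R h.1 x - lsc R' h.1 x| ∂PX

open Classical in
noncomputable def lgr {X : Type*} (h : X → Bool) (R' : X → X → Prop) (x : X) (B : Set X) : ℝ :=
  if (h x = false ∧ (∃ x' ∈ B, h x' = true) ∧ (∀ x'', R' x x'' → h x'' = false)) ∨
     (h x = false ∧ (∀ x' ∈ B, h x' = false) ∧ (∃ x'', R' x x'' ∧ h x'' = true)) then 1 else 0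

def grLossSet {X : Type*} (h : X → Bool) (R' : X → X → Prop) : Set (X × Set X) :=
  {p | lgr h R' p.1 p.2 = 1}

/-!
Pointwise, `lstr R h` is the maximum of the 0-1 loss and `lsc R h`, so changing the manipulation
graph from `R'` to `R` moves it by at most `|lsc R h - lsc R' h|`. Integrating and taking the
supremum over `H` gives `L→ ≤ L⇝ + d(→, ⇝)`; the claim follows as `0 ≤ L⇝ ≤ α`.
-/

section Pointwise

variable {X : Type*} (R R' : X → X → Prop) (h : X → Bool)

lemma lstr_nonneg (x : X) (y : Bool) : 0 ≤ lstr R h x y := by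
  unfold lstr; split <;> norm_num

lemma lstr_le_one (x : X) (y : Bool) : lstr R h x y ≤ 1 := by
  unfold lstr; split <;> norm_num

lemma abs_lsc_sub_lsc_le_one (x : X) : |lsc R h x - lsc R' h x| ≤ 1 := by
  unfold lsc; split_ifs <;> norm_num

lemma lstr_le_lstr_add_abs_lsc_sub (x : X) (y : Bool) :
    lstr R h x y ≤ lstr R' h x y + |lsc R h x - lsc R' h x| := by
  unfold lstr lsc
  split_ifs <;> norm_num <;> aesop

end Pointwise

section Integrated

variable {X : Type*} [MeasurableSpace X]

lemma sLoss_nonneg (P : Measure (X × Bool)) (R : X → X → Prop) (h : X → Bool) :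
    0 ≤ sLoss P R h :=
  integral_nonneg fun p => lstr_nonneg R h p.1 p.2

lemma sLoss_le_sLoss_add_integral_abs_lsc_sub (P : Measure (X × Bool)) [IsFiniteMeasure P]
    (R R' : X → X → Prop) (h : X → Bool) (hR : Measurable (lsc R h))
    (hR' : Measurable (lsc R' h)) (hstr' : Measurable fun p : X × Bool => lstr R' h p.1 p.2) :
    sLoss P R h ≤ sLoss P R' h + ∫ x, |lsc R h x - lsc R' h x| ∂P.map Prod.fst := by
  have hdiff : Measurable fun x => |lsc R h x - lsc R' h x| := (hR.sub hR').abs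
  have hint_str : Integrable (fun p : X × Bool => lstr R' h p.1 p.2) P :=
    .of_bound hstr'.aestronglyMeasurable 1 <| .of_forall fun p => by
      rw [Real.norm_of_nonneg (lstr_nonneg ..)]; exact lstr_le_one ..
  have hint_diff : Integrable (fun p : X × Bool => |lsc R h p.1 - lsc R' h p.1|) P :=
    .of_bound (hdiff.comp measurable_fst).aestronglyMeasurable 1 <| .of_forall fun p => by
      rw [Real.norm_eq_abs, abs_abs]; exact abs_lsc_sub_lsc_le_one ..
  rw [integral_map measurable_fst.aemeasurable hdiff.aestronglyMeasurable, sLoss, sLoss,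
    ← integral_add hint_str hint_diff]
  exact integral_mono_of_nonneg (.of_forall fun p => lstr_nonneg R h p.1 p.2)
    (hint_str.add hint_diff) (.of_forall fun p => lstr_le_lstr_add_abs_lsc_sub R R' h p.1 p.2)

lemma integral_abs_lsc_sub_le_gdist {H : Set (X → Bool)} (μ : Measure X) [IsFiniteMeasure μ]
    (R R' : X → X → Prop) {h : X → Bool} (hH : h ∈ H) :
    ∫ x, |lsc R h x - lsc R' h x| ∂μ ≤ gdist H μ R R' := by
  refine le_ciSup (f := fun g : H => ∫ x, |lsc R g.1 x - lsc R' g.1 x| ∂μ)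
    ⟨μ.real Set.univ, ?_⟩ ⟨h, hH⟩
  rintro _ ⟨g, rfl⟩
  have hbound := norm_integral_le_of_norm_le_const (μ := μ) (C := 1) <| .of_forall fun x => by
    rw [Real.norm_eq_abs, abs_abs]; exact abs_lsc_sub_lsc_le_one R R' g.1 x
  rwa [one_mul, Real.norm_of_nonneg (integral_nonneg fun _ => abs_nonneg _)] at hbound

end Integrated

theorem stmt16_general {X : Type*} [MeasurableSpace X] (P : Measure (X × Bool))
    [IsProbabilityMeasure P] (H : Set (X → Bool)) (R R' : X → X → Prop)
    (h : X → Bool) (hH : h ∈ H) (α β : ℝ)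
    (hm : ∀ g ∈ H, Measurable (lsc R g)) (hm' : ∀ g ∈ H, Measurable (lsc R' g))
    (hms' : Measurable (fun p : X × Bool => lstr R' h p.1 p.2))
    (hα : sLoss P R' h ≤ α) (hβ : gdist H (P.map Prod.fst) R R' ≤ β) :
    sLoss P R h ≤ 2 * α + β := by
  have hsurrogate := sLoss_le_sLoss_add_integral_abs_lsc_sub P R R' h (hm h hH) (hm' h hH) hms'
  have hdist := integral_abs_lsc_sub_le_gdist (P.map Prod.fst) R R' hH
  linarith [sLoss_nonneg P R' h]

theorem stmt16 {X : Type*} [MeasurableSpace X] (P : Measure (X × Bool))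
    [IsProbabilityMeasure P] (H : Set (X → Bool)) (R R' : X → X → Prop)
    (h : X → Bool) (hH : h ∈ H) (α β : ℝ)
    (hm : ∀ g ∈ H, Measurable (lsc R g)) (hm' : ∀ g ∈ H, Measurable (lsc R' g))
    (hms : Measurable (fun p : X × Bool => lstr R h p.1 p.2))
    (hms' : Measurable (fun p : X × Bool => lstr R' h p.1 p.2))
    (hmb : Measurable (fun p : X × Bool => l01 h p.1 p.2))
    (hα : sLoss P R' h ≤ α) (hβ : gdist H (P.map Prod.fst) R R' ≤ β) :
    sLoss P R h ≤ 2 * α + β :=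
  stmt16_general P H R R' h hH α β hm hm' hms' hα hβ
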